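/- Let n ≥ 1 be an integer and let I : 𝔻 → ℂ be holomorphic on 𝔻 with |I(z)| ≤ 1 for all z ∈ 𝔻. Then for every z ∈ 𝔻 the denominator (2n+1)·( I(z)ⁿ + 2·∑_{j=0}^{n-1} I(z)^j ) is nonzero, the function F̃(z) = ( −(2n−1)·I(z)ⁿ + ∑_{j=0}^{n-1} (4n − 2 − 8j)·I(z)^j ) / ( (2n+1)·( I(z)ⁿ + 2·∑_{j=0}^{n-1} I(z)^j ) ) is holomorphic on 𝔻, and there exists a constant C such that |F̃(z)| ≤ C for all z ∈ 𝔻. -/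

import Mathlib

/-!
With `p w = wⁿ + 2 ∑_{j<n} wʲ`, one has `(1 - w) p w = 2 - wⁿ (1 + w)`. A zero of `p` in the closed
unit disk other than `1` would therefore satisfy `wⁿ (1 + w) = 2`, which forces `‖1 + w‖ = 2` and
hence `w = 1`; and `p 1 = 2n + 1`. So `F̃ = R ∘ I` for a rational function `R` that is holomorphic
at every point of the closed unit disk, and `|F̃|` is bounded by the maximum of `|R|` on that
compact set.
-/

open Finset

theorem Complex.eq_one_of_norm_le_one_of_norm_one_add_eq_two {w : ℂ} (hw : ‖w‖ ≤ 1)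
    (h : ‖1 + w‖ = 2) : w = 1 := by
  have hw' : ‖w‖ = 1 := le_antisymm hw (by linarith [norm_add_le (1 : ℂ) w, norm_one (α := ℂ)])
  have hsame : ‖w‖ • (1 : ℂ) = ‖(1 : ℂ)‖ • w :=
    norm_add_eq_iff_real.mp (by rw [h, hw', norm_one]; norm_num)
  simpa [hw'] using hsame.symm

theorem one_sub_mul_pow_add_two_mul_geom_sum {R : Type*} [CommRing R] (w : R) (n : ℕ) :
    (1 - w) * (w ^ n + 2 * ∑ j ∈ range n, w ^ j) = 2 - w ^ n * (1 + w) := by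
  linear_combination (-2 : R) * geom_sum_mul w n

theorem pow_add_two_mul_geom_sum_ne_zero {w : ℂ} (hw : ‖w‖ ≤ 1) (n : ℕ) :
    w ^ n + 2 * ∑ j ∈ range n, w ^ j ≠ 0 := by
  intro h
  by_cases hw1 : w = 1
  · subst hw1
    norm_num at h
    norm_cast at h
    omega
  have hprod : ‖w ^ n‖ * ‖1 + w‖ = 2 := by
    rw [← norm_mul, show w ^ n * (1 + w) = 2 by
      linear_combination one_sub_mul_pow_add_two_mul_geom_sum w n - (1 - w) * h]
    norm_num
  have hpow : ‖w ^ n‖ ≤ 1 := by rw [norm_pow]; exact pow_le_one₀ (norm_nonneg w) hw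
  have hsum : ‖1 + w‖ ≤ 2 := by linarith [norm_add_le (1 : ℂ) w, norm_one (α := ℂ)]
  exact hw1 <| Complex.eq_one_of_norm_le_one_of_norm_one_add_eq_two hw <| by
    nlinarith [norm_nonneg (1 + w)]

theorem tilde_F_holomorphic_bounded_general (n : ℕ) (I : ℂ → ℂ)
    (hI : DifferentiableOn ℂ I (Metric.ball (0 : ℂ) 1))
    (hI1 : ∀ z ∈ Metric.ball (0 : ℂ) 1, ‖I z‖ ≤ 1) :
    (∀ z ∈ Metric.ball (0 : ℂ) 1,
        (2 * (n : ℂ) + 1) * ((I z) ^ n + 2 * ∑ j ∈ Finset.range n, (I z) ^ j) ≠ 0) ∧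
      DifferentiableOn ℂ
        (fun z => (-(2 * (n : ℂ) - 1) * (I z) ^ n +
            ∑ j ∈ Finset.range n, (4 * (n : ℂ) - 2 - 8 * (j : ℂ)) * (I z) ^ j) /
          ((2 * (n : ℂ) + 1) * ((I z) ^ n + 2 * ∑ j ∈ Finset.range n, (I z) ^ j)))
        (Metric.ball (0 : ℂ) 1) ∧
      ∃ C : ℝ, ∀ z ∈ Metric.ball (0 : ℂ) 1,
        ‖(-(2 * (n : ℂ) - 1) * (I z) ^ n +
            ∑ j ∈ Finset.range n, (4 * (n : ℂ) - 2 - 8 * (j : ℂ)) * (I z) ^ j) /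
          ((2 * (n : ℂ) + 1) * ((I z) ^ n + 2 * ∑ j ∈ Finset.range n, (I z) ^ j))‖ ≤ C := by
  set R : ℂ → ℂ := fun w => (-(2 * (n : ℂ) - 1) * w ^ n +
      ∑ j ∈ range n, (4 * (n : ℂ) - 2 - 8 * (j : ℂ)) * w ^ j) /
    ((2 * (n : ℂ) + 1) * (w ^ n + 2 * ∑ j ∈ range n, w ^ j))
  have hden : ∀ w : ℂ, ‖w‖ ≤ 1 →
      (2 * (n : ℂ) + 1) * (w ^ n + 2 * ∑ j ∈ range n, w ^ j) ≠ 0 := fun w hw =>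
    mul_ne_zero (by norm_cast) (pow_add_two_mul_geom_sum_ne_zero hw n)
  have hR : ∀ w : ℂ, ‖w‖ ≤ 1 → DifferentiableAt ℂ R w := fun w hw =>
    DifferentiableAt.div (by fun_prop) (by fun_prop) (hden w hw)
  refine ⟨fun z hz => hden _ (hI1 z hz), fun z hz => ?_, ?_⟩
  · exact (hR _ (hI1 z hz)).comp_differentiableWithinAt z (hI z hz)
  · obtain ⟨C, hC⟩ := (isCompact_closedBall (0 : ℂ) 1).exists_bound_of_continuousOn
      fun w hw => (hR w (by simpa using hw)).continuousAt.continuousWithinAt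
    exact ⟨C, fun z hz => hC _ (by simpa using hI1 z hz)⟩

/-- For `n ≥ 1` and `I` holomorphic on the open unit disk with `|I| ≤ 1` there, the denominator
`(2n+1)(Iⁿ + 2∑_{j=0}^{n-1} I^j)` never vanishes on the disk, the function
`F̃ = (−(2n−1)Iⁿ + ∑_{j=0}^{n-1} (4n−2−8j)I^j) / ((2n+1)(Iⁿ + 2∑_{j=0}^{n-1} I^j))`
is holomorphic on the disk, and `F̃` is bounded on the disk. -/
theorem tilde_F_holomorphic_bounded (n : ℕ) (hn : 1 ≤ n) (I : ℂ → ℂ)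
    (hI : DifferentiableOn ℂ I (Metric.ball (0 : ℂ) 1))
    (hI1 : ∀ z ∈ Metric.ball (0 : ℂ) 1, ‖I z‖ ≤ 1) :
    (∀ z ∈ Metric.ball (0 : ℂ) 1,
        (2 * (n : ℂ) + 1) * ((I z) ^ n + 2 * ∑ j ∈ Finset.range n, (I z) ^ j) ≠ 0) ∧
      DifferentiableOn ℂ
        (fun z => (-(2 * (n : ℂ) - 1) * (I z) ^ n +
            ∑ j ∈ Finset.range n, (4 * (n : ℂ) - 2 - 8 * (j : ℂ)) * (I z) ^ j) /
          ((2 * (n : ℂ) + 1) * ((I z) ^ n + 2 * ∑ j ∈ Finset.range n, (I z) ^ j)))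
        (Metric.ball (0 : ℂ) 1) ∧
      ∃ C : ℝ, ∀ z ∈ Metric.ball (0 : ℂ) 1,
        ‖(-(2 * (n : ℂ) - 1) * (I z) ^ n +
            ∑ j ∈ Finset.range n, (4 * (n : ℂ) - 2 - 8 * (j : ℂ)) * (I z) ^ j) /
          ((2 * (n : ℂ) + 1) * ((I z) ^ n + 2 * ∑ j ∈ Finset.range n, (I z) ^ j))‖ ≤ C :=
  tilde_F_holomorphic_bounded_general n I hI hI1
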